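/- Let Z ~ N(0,1), α = 1, and Ψ(σ²) = E[(F¹(1 + σZ) - 1)²] with F¹ the projection onto [-1,1]. Then for all σ > 0, the derivative of Ψ with respect to σ² satisfies dΨ/dσ² ≤ 1/2, and dΨ/dσ² → 1/2 as σ² → 0⁺. -/

import Mathlib

/-!
Write `φ` for the standard normal density, `Q(t) = ∫_{t}^{∞} φ` and `H(t) = ∫_0^t z² φ(z) dz`, and
put `t = 2/√v`. Replacing `Z` by `-Z`, the error `(F¹(1 - √v Z) - 1)²` vanishes for `Z ≤ 0`, equals
`v Z²` for `0 < Z ≤ t` and equals `4` for `Z > t`, so `Ψ(v) = 4 Q(t) + v H(t)`. Since `Q' = -φ`,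
`H'(t) = t² φ(t)` and `v t² = 4`, the two chain-rule terms cancel and `dΨ/dv = H(t)`. Integrating
by parts, `H(t) = 1/2 - Q(t) - t φ(t)`: this is at most `1/2`, and tends to `1/2` as `t → ∞`,
i.e. as `v → 0⁺`.
-/

open ProbabilityTheory MeasureTheory Set Filter Topology Real

lemma gaussianPDFReal_zero_one (x : ℝ) :
    gaussianPDFReal 0 1 x = (√(2 * π))⁻¹ * exp (-x ^ 2 / 2) := by
  simp [gaussianPDFReal]

lemma continuous_gaussianPDFReal_zero_one : Continuous (gaussianPDFReal 0 1) := by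
  simp_rw [funext gaussianPDFReal_zero_one]; fun_prop

lemma hasDerivAt_gaussianPDFReal_zero_one (x : ℝ) :
    HasDerivAt (gaussianPDFReal 0 1) (-x * gaussianPDFReal 0 1 x) x := by
  simp_rw [funext gaussianPDFReal_zero_one]
  exact ((((hasDerivAt_pow 2 x).fun_neg).div_const 2).exp).const_mul (√(2 * π))⁻¹
    |>.congr_deriv (by push_cast; ring)

lemma tendsto_mul_gaussianPDFReal_zero_one_atTop :
    Tendsto (fun t ↦ t * gaussianPDFReal 0 1 t) atTop (𝓝 0) := by
  have h := ((tendsto_rpow_abs_mul_exp_neg_mul_sq_cocompact one_half_pos 1).mono_left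
    atTop_le_cocompact).const_mul (√(2 * π))⁻¹
  rw [mul_zero] at h
  refine h.congr' ?_
  filter_upwards [eventually_ge_atTop 0] with t ht
  rw [gaussianPDFReal_zero_one, rpow_one, abs_of_nonneg ht,
    show -(1 / 2) * t ^ 2 = -t ^ 2 / 2 by ring]
  ring

noncomputable def gaussianTail (t : ℝ) : ℝ := ∫ x in Ioi t, gaussianPDFReal 0 1 x

lemma gaussianTail_nonneg (t : ℝ) : 0 ≤ gaussianTail t :=
  setIntegral_nonneg measurableSet_Ioi fun x _ ↦ gaussianPDFReal_nonneg 0 1 x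

lemma gaussianTail_zero : gaussianTail 0 = 1 / 2 := by
  have hsymm : ∫ x in Iic 0, gaussianPDFReal 0 1 x = gaussianTail 0 := by
    rw [gaussianTail, ← neg_zero, ← integral_comp_neg_Ioi]
    simp [gaussianPDFReal_zero_one]
  have htotal := intervalIntegral.integral_Iic_add_Ioi (b := (0 : ℝ))
    (integrable_gaussianPDFReal 0 1).integrableOn (integrable_gaussianPDFReal 0 1).integrableOn
  rw [integral_gaussianPDFReal_eq_one 0 one_ne_zero, hsymm] at htotal
  rw [gaussianTail] at htotal ⊢
  linarith

lemma hasDerivAt_gaussianTail (t : ℝ) :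
    HasDerivAt gaussianTail (-gaussianPDFReal 0 1 t) t := by
  have hsplit : ∀ u, gaussianTail u = gaussianTail 0 - ∫ x in 0..u, gaussianPDFReal 0 1 x := by
    intro u
    rw [gaussianTail, gaussianTail, ← intervalIntegral.integral_interval_add_Ioi (a := 0) (b := u)
      (integrable_gaussianPDFReal 0 1).integrableOn (integrable_gaussianPDFReal 0 1).integrableOn]
    ring
  rw [funext hsplit]
  exact (intervalIntegral.integral_hasDerivAt_right
    (integrable_gaussianPDFReal 0 1).intervalIntegrable
    (stronglyMeasurable_gaussianPDFReal 0 1).stronglyMeasurableAtFilter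
    continuous_gaussianPDFReal_zero_one.continuousAt).const_sub _

lemma tendsto_gaussianTail_atTop : Tendsto gaussianTail atTop (𝓝 0) :=
  tendsto_integral_Ioi_zero tendsto_id

noncomputable def gaussianTruncSecondMoment (t : ℝ) : ℝ :=
  ∫ z in 0..t, z ^ 2 * gaussianPDFReal 0 1 z

lemma continuous_sq_mul_gaussianPDFReal_zero_one :
    Continuous fun z : ℝ ↦ z ^ 2 * gaussianPDFReal 0 1 z := by
  have := continuous_gaussianPDFReal_zero_one; fun_prop

lemma hasDerivAt_gaussianTruncSecondMoment (t : ℝ) :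
    HasDerivAt gaussianTruncSecondMoment (t ^ 2 * gaussianPDFReal 0 1 t) t := by
  have hcont := continuous_sq_mul_gaussianPDFReal_zero_one
  exact intervalIntegral.integral_hasDerivAt_right (hcont.intervalIntegrable _ _)
    (hcont.stronglyMeasurableAtFilter _ _) hcont.continuousAt

lemma gaussianTruncSecondMoment_eq (t : ℝ) :
    gaussianTruncSecondMoment t = 1 / 2 - gaussianTail t - t * gaussianPDFReal 0 1 t := by
  rw [gaussianTruncSecondMoment, intervalIntegral.integral_eq_sub_of_hasDerivAt
    (f := fun z ↦ -gaussianTail z - z * gaussianPDFReal 0 1 z)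
    (fun z _ ↦ by
      convert (hasDerivAt_gaussianTail z).fun_neg.fun_sub
        ((hasDerivAt_id' z).fun_mul (hasDerivAt_gaussianPDFReal_zero_one z)) using 1
      ring)
    (continuous_sq_mul_gaussianPDFReal_zero_one.intervalIntegrable _ _), gaussianTail_zero]
  ring

lemma gaussianTruncSecondMoment_le {t : ℝ} (ht : 0 ≤ t) :
    gaussianTruncSecondMoment t ≤ 1 / 2 := by
  rw [gaussianTruncSecondMoment_eq]
  have := gaussianTail_nonneg t
  have := mul_nonneg ht (gaussianPDFReal_nonneg 0 1 t)
  linarith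

lemma tendsto_gaussianTruncSecondMoment_atTop :
    Tendsto gaussianTruncSecondMoment atTop (𝓝 (1 / 2)) := by
  simp_rw [funext gaussianTruncSecondMoment_eq]
  simpa using (tendsto_gaussianTail_atTop.const_sub (1 / 2 : ℝ)).sub
    tendsto_mul_gaussianPDFReal_zero_one_atTop

lemma integral_comp_neg_gaussianReal_zero {E : Type*} [NormedAddCommGroup E] [NormedSpace ℝ E]
    (v : NNReal) (f : ℝ → E) :
    ∫ z, f (-z) ∂gaussianReal 0 v = ∫ z, f z ∂gaussianReal 0 v := by
  conv_rhs => rw [← neg_zero, ← gaussianReal_map_neg]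
  exact (integral_map_equiv (MeasurableEquiv.neg ℝ) f).symm

lemma sq_clip_neg_sub_one_eq_indicator {s : ℝ} (hs : 0 < s) (z : ℝ) :
    (max (-1 : ℝ) (min 1 (1 + s * -z)) - 1) ^ 2 =
      (Ioc 0 (2 / s)).indicator (fun z ↦ s ^ 2 * z ^ 2) z +
        (Ioi (2 / s)).indicator (fun _ ↦ 4) z := by
  have hst : s * (2 / s) = 2 := by field_simp
  rcases le_or_gt z 0 with h0 | h0
  · have ht : z < 2 / s := h0.trans_lt (by positivity)
    rw [indicator_of_notMem (fun h ↦ h0.not_gt h.1),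
      indicator_of_notMem (show z ∉ Ioi (2 / s) from ht.le.not_gt),
      min_eq_left (by nlinarith), max_eq_right (by norm_num)]
    ring
  rcases le_or_gt z (2 / s) with ht | ht
  · rw [indicator_of_mem (show z ∈ Ioc 0 (2 / s) from ⟨h0, ht⟩),
      indicator_of_notMem (show z ∉ Ioi (2 / s) from ht.not_gt),
      min_eq_right (by nlinarith), max_eq_right (by nlinarith)]
    ring
  · rw [indicator_of_notMem (fun h ↦ ht.not_ge h.2),
      indicator_of_mem (show z ∈ Ioi (2 / s) from ht),
      min_eq_right (by nlinarith), max_eq_left (by nlinarith)]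
    norm_num

lemma integral_sq_clip_sub_one_gaussianReal {s : ℝ} (hs : 0 < s) :
    ∫ z, (max (-1 : ℝ) (min 1 (1 + s * z)) - 1) ^ 2 ∂gaussianReal 0 1
      = 4 * gaussianTail (2 / s) + s ^ 2 * gaussianTruncSecondMoment (2 / s) := by
  have ht : 0 < 2 / s := by positivity
  have hcont : Continuous fun z ↦ gaussianPDFReal 0 1 z * (s ^ 2 * z ^ 2) := by
    have := continuous_gaussianPDFReal_zero_one; fun_prop
  rw [← integral_comp_neg_gaussianReal_zero, integral_gaussianReal_eq_integral_smul one_ne_zero]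
  simp_rw [smul_eq_mul, sq_clip_neg_sub_one_eq_indicator hs, mul_add, ← indicator_mul_right]
  rw [integral_add (hcont.integrableOn_Ioc.integrable_indicator measurableSet_Ioc)
      (((integrable_gaussianPDFReal 0 1).mul_const 4).integrableOn.integrable_indicator
        measurableSet_Ioi),
    integral_indicator measurableSet_Ioc, integral_indicator measurableSet_Ioi,
    ← intervalIntegral.integral_of_le ht.le, integral_mul_const, gaussianTail,
    gaussianTruncSecondMoment, ← intervalIntegral.integral_const_mul]
  simp_rw [mul_left_comm (gaussianPDFReal 0 1 _), mul_comm (gaussianPDFReal 0 1 _)]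
  ring

noncomputable def clipMSE (v : ℝ) : ℝ :=
  4 * gaussianTail (2 / √v) + v * gaussianTruncSecondMoment (2 / √v)

lemma integral_sq_clip_sub_one_gaussianReal_eq_clipMSE {v : ℝ} (hv : 0 < v) :
    ∫ z, (max (-1 : ℝ) (min 1 (1 + √v * z)) - 1) ^ 2 ∂gaussianReal 0 1 = clipMSE v := by
  rw [integral_sq_clip_sub_one_gaussianReal (sqrt_pos.2 hv), sq_sqrt hv.le, clipMSE]

lemma hasDerivAt_clipMSE {v : ℝ} (hv : 0 < v) :
    HasDerivAt clipMSE (gaussianTruncSecondMoment (2 / √v)) v := by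
  have hs : 0 < √v := sqrt_pos.2 hv
  obtain ⟨t', ht⟩ : ∃ t', HasDerivAt (fun w ↦ 2 / √w) t' v :=
    ⟨_, ((differentiableAt_const 2).div (differentiableAt_id.sqrt hv.ne') hs.ne').hasDerivAt⟩
  have h := ((hasDerivAt_gaussianTail _).comp v ht).const_mul 4 |>.add
    ((hasDerivAt_id' v).mul ((hasDerivAt_gaussianTruncSecondMoment _).comp v ht))
  have hvt : v * (2 / √v) ^ 2 = 4 := by
    rw [div_pow, sq_sqrt hv.le]; field_simp; norm_num
  refine h.congr_deriv ?_
  simp only [Function.comp_apply]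
  linear_combination gaussianPDFReal 0 1 (2 / √v) * t' * hvt

lemma tendsto_two_div_sqrt_nhdsGT_zero : Tendsto (fun v : ℝ ↦ 2 / √v) (𝓝[>] 0) atTop := by
  have h : Tendsto (fun v : ℝ ↦ √v) (𝓝[>] 0) (𝓝[>] 0) :=
    tendsto_nhdsWithin_of_tendsto_nhds_of_eventually_within _
      ((continuous_sqrt.tendsto' 0 0 sqrt_zero).mono_left nhdsWithin_le_nhds)
      (eventually_nhdsWithin_of_forall fun _ hv ↦ sqrt_pos.2 hv)
  simp only [div_eq_mul_inv]
  exact (tendsto_inv_nhdsGT_zero.comp h).const_mul_atTop two_pos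

/-- For the BPSK clipping-denoiser MSE Ψ(v) = E[(F¹(1+√v·Z)-1)²] (v = σ²),
its derivative satisfies dΨ/dv ≤ 1/2 for all v > 0, and tends to 1/2 as v → 0⁺. -/
theorem stmt_8
    (Ψ : ℝ → ℝ)
    (hΨ : ∀ v, Ψ v =
      ∫ z, (max (-1 : ℝ) (min 1 (1 + Real.sqrt v * z)) - 1) ^ 2 ∂(gaussianReal 0 1)) :
    (∀ v : ℝ, 0 < v → deriv Ψ v ≤ 1 / 2) ∧
    Filter.Tendsto (deriv Ψ) (nhdsWithin 0 (Set.Ioi 0)) (nhds (1 / 2)) := by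
  have hderiv : ∀ v : ℝ, 0 < v → deriv Ψ v = gaussianTruncSecondMoment (2 / √v) := by
    intro v hv
    have hΨ_eq : Ψ =ᶠ[𝓝 v] clipMSE := eventually_of_mem (Ioi_mem_nhds hv) fun w hw ↦
      (hΨ w).trans (integral_sq_clip_sub_one_gaussianReal_eq_clipMSE hw)
    exact ((hasDerivAt_clipMSE hv).congr_of_eventuallyEq hΨ_eq).deriv
  refine ⟨fun v hv ↦ ?_, ?_⟩
  · rw [hderiv v hv]
    exact gaussianTruncSecondMoment_le (by positivity)
  · exact (tendsto_gaussianTruncSecondMoment_atTop.comp tendsto_two_div_sqrt_nhdsGT_zero).congr'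
      (eventually_nhdsWithin_of_forall fun v hv ↦ (hderiv v hv).symm)
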